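/- In a finite commutative BCK-algebra A whose order is a rooted tree with single atom (intervals [0,a] are chains), for every branching element b there exists a set M of maximal elements of A such that b = ⋀_{m ∈ M} m; concretely, b = ⋀ {m ∈ m(A) : m > b}. -/
import Mathlib


structure CBCK (α : Type*) where
  sub : α → α → α
  zero : α
  sub_zero : ∀ x, sub x zero = x
  zero_sub : ∀ x, sub zero x = zero
  comm : ∀ x y, sub x (sub x y) = sub y (sub y x)
  exch : ∀ x y z, sub (sub x y) z = sub (sub x z) y

namespace CBCK

variable {α : Type*}

/-- The induced order: `x ≤ y` iff `x ⊖ y = 0`. -/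
def le (A : CBCK α) (x y : α) : Prop := A.sub x y = A.zero

def lt (A : CBCK α) (x y : α) : Prop := A.le x y ∧ x ≠ y

/-- The meet `x ∧ y = x ⊖ (x ⊖ y)`. -/
def meet (A : CBCK α) (x y : α) : α := A.sub x (A.sub x y)

/-- An atom: a minimal nonzero element. -/
def atom (A : CBCK α) (e : α) : Prop := e ≠ A.zero ∧ ∀ x, A.lt x e → x = A.zero

/-- A maximal element. -/
def maximal (A : CBCK α) (m : α) : Prop := ∀ x, A.le m x → x = m

/-- A branching element: `b` with `c, d > b` and `c ∧ d = b`. -/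
def branching (A : CBCK α) (b : α) : Prop :=
  ∃ c d, A.lt b c ∧ A.lt b d ∧ A.meet c d = b

/-- The rooted-tree condition: every interval `[0, a]` is a chain. -/
def chainIntervals (A : CBCK α) : Prop :=
  ∀ a x y, A.le x a → A.le y a → A.le x y ∨ A.le y x

/-- The height of an element: `h(a) = |[0,a]| - 1`. -/
noncomputable def height (A : CBCK α) (a : α) : ℕ :=
  ({x | A.le x a} : Set α).ncard - 1

/-- Iterated subtraction: `x ⊖ 0·y = x`, `x ⊖ (k+1)·y = (x ⊖ k·y) ⊖ y`. -/
def isub (A : CBCK α) (x : α) : ℕ → α → α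
  | 0, _ => x
  | k + 1, y => A.sub (A.isub x k y) y

/-- A subalgebra universe: contains `0` and is closed under `⊖`. -/
def IsSub (A : CBCK α) (B : Set α) : Prop :=
  A.zero ∈ B ∧ ∀ x ∈ B, ∀ y ∈ B, A.sub x y ∈ B

/-- The subalgebra generated by `S`: the least `⊖`-closed subset containing `S ∪ {0}`. -/
def gen (A : CBCK α) (S : Set α) : Set α :=
  ⋂₀ {B : Set α | A.IsSub B ∧ S ⊆ B}

section Aux

variable {α : Type*} (A : CBCK α)

lemma sub_self (x : α) : A.sub x x = A.zero := by
  have h := A.comm x A.zero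
  rwa [A.sub_zero, A.zero_sub] at h

lemma le_refl (x : α) : A.le x x := A.sub_self x

lemma le_antisymm {x y : α} (h1 : A.le x y) (h2 : A.le y x) : x = y := by
  have h := A.comm x y
  rw [h1, h2, A.sub_zero, A.sub_zero] at h
  exact h

/-- If `x ≤ y` then `x = y ⊖ (y ⊖ x)`. -/
lemma eq_of_le {x y : α} (h : A.le x y) : x = A.sub y (A.sub y x) := by
  have hc := A.comm x y
  rwa [h, A.sub_zero] at hc

lemma le_trans {x y z : α} (h1 : A.le x y) (h2 : A.le y z) : A.le x z := by
  have hx := A.eq_of_le h1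
  unfold le
  rw [hx, A.exch, h2, A.zero_sub]

lemma sub_le (x y : α) : A.le (A.sub x y) x := by
  unfold le
  rw [A.exch, A.sub_self, A.zero_sub]

/-- Key identity: `(z⊖y)⊖(z⊖x) = (x⊖y)⊖(x⊖z)`. -/
lemma key (x y z : α) :
    A.sub (A.sub z y) (A.sub z x) = A.sub (A.sub x y) (A.sub x z) := by
  rw [A.exch, A.comm z x, A.exch]

lemma sub_le_sub_left {x y : α} (h : A.le x y) (z : α) :
    A.le (A.sub z y) (A.sub z x) := by
  unfold le
  rw [A.key, h, A.zero_sub]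

lemma le_meet {x y z : α} (hzx : A.le z x) (hzy : A.le z y) :
    A.le z (A.meet x y) := by
  have h1 : A.le (A.sub x y) (A.sub x z) := A.sub_le_sub_left hzy x
  have h2 : A.le (A.sub x (A.sub x z)) (A.sub x (A.sub x y)) := A.sub_le_sub_left h1 x
  have hz : z = A.sub x (A.sub x z) := by
    have := A.eq_of_le hzx
    exact this
  unfold meet
  rw [hz]
  exact h2

lemma meet_comm (x y : α) : A.meet x y = A.meet y x := A.comm x y

lemma meet_eq_left {x y : α} (h : A.le x y) : A.meet x y = x := by
  unfold meet
  rw [h, A.sub_zero]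

lemma exists_maximal [Fintype α] (x : α) :
    ∃ m, A.maximal m ∧ A.le x m := by
  classical
  generalize hn : (Finset.univ.filter (fun y => A.lt x y)).card = n
  induction n using Nat.strong_induction_on generalizing x with
  | _ n ih =>
    by_cases hmax : A.maximal x
    · exact ⟨x, hmax, A.le_refl x⟩
    · have : ∃ y, A.le x y ∧ y ≠ x := by
        by_contra hcon
        push_neg at hcon
        exact hmax fun y hy => hcon y hy
      obtain ⟨y, hxy, hyx⟩ := this
      have hlt : A.lt x y := ⟨hxy, fun h => hyx h.symm⟩
      have hsub : (Finset.univ.filter (fun z => A.lt y z)) ⊂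
          (Finset.univ.filter (fun z => A.lt x z)) := by
        constructor
        · intro z hz
          simp only [Finset.mem_filter, Finset.mem_univ, true_and] at hz ⊢
          refine ⟨A.le_trans hxy hz.1, fun hzx => ?_⟩
          subst hzx
          exact hyx (A.le_antisymm hz.1 hxy)
        · intro hcon
          have hy : y ∈ Finset.univ.filter (fun z => A.lt x z) := by
            simp only [Finset.mem_filter, Finset.mem_univ, true_and]
            exact hlt
          have := hcon hy
          simp only [Finset.mem_filter, Finset.mem_univ, true_and] at this
          exact this.2 rfl
      have hcard : (Finset.univ.filter (fun z => A.lt y z)).card < n := by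
        rw [← hn]; exact Finset.card_lt_card hsub
      obtain ⟨m, hm, hym⟩ := ih _ hcard y rfl
      exact ⟨m, hm, A.le_trans hxy hym⟩

end Aux

end CBCK

/-- In a finite single-atom rooted-tree cBCK-algebra, every branching element
`b` is the meet of the maximal elements above it: the set
`{m ∈ m(A) : m > b}` is nonempty and `b` is its greatest lower bound. -/
theorem stmt16 {α : Type*} [Fintype α] (A : CBCK α)
    (hchain : A.chainIntervals)
    (e : α) (he : A.atom e) (huniq : ∀ x, A.atom x → x = e)
    (b : α) (hb : A.branching b) :
    ({m | A.maximal m ∧ A.lt b m} : Set α).Nonempty ∧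
    (∀ m, A.maximal m → A.lt b m → A.le b m) ∧
    (∀ z, (∀ m, A.maximal m → A.lt b m → A.le z m) → A.le z b) := by
  obtain ⟨c, d, hbc, hbd, hmeet⟩ := hb
  obtain ⟨mc, hmc, hcmc⟩ := A.exists_maximal c
  obtain ⟨md, hmd, hdmd⟩ := A.exists_maximal d
  have hbmc : A.lt b mc := by
    refine ⟨A.le_trans hbc.1 hcmc, fun h => ?_⟩
    exact hbc.2 (A.le_antisymm hbc.1 (h ▸ hcmc))
  have hbmd : A.lt b md := by
    refine ⟨A.le_trans hbd.1 hdmd, fun h => ?_⟩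
    exact hbd.2 (A.le_antisymm hbd.1 (h ▸ hdmd))
  refine ⟨⟨mc, hmc, hbmc⟩, fun m _ hlt => hlt.1, fun z hz => ?_⟩
  have hzmc := hz mc hmc hbmc
  have hzmd := hz md hmd hbmd
  rcases hchain mc z b hzmc hbmc.1 with h | hbz
  · exact h
  · rcases hchain mc z c hzmc hcmc with hzc | hcz
    · rcases hchain md z d hzmd hdmd with hzd | hdz
      · have := A.le_meet hzc hzd
        rwa [hmeet] at this
      · exfalso
        have hdc : A.le d c := A.le_trans hdz hzc
        have : A.meet c d = d := by rw [A.meet_comm, A.meet_eq_left hdc]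
        exact hbd.2 (this ▸ hmeet).symm
    · exfalso
      have hcmd : A.le c md := A.le_trans hcz hzmd
      rcases hchain md c d hcmd hdmd with hcd | hdc
      · exact hbc.2 ((A.meet_eq_left hcd ▸ hmeet)).symm
      · have : A.meet c d = d := by rw [A.meet_comm, A.meet_eq_left hdc]
        exact hbd.2 (this ▸ hmeet).symm
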